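/- arXiv:2301.05045 — 5 statements merged into one kernel-verified Lean document; each statement's English description precedes it below -/
import Mathlib

section
/- If a frame Φ for a finite-dimensional Hilbert space does phase retrieval, then its canonical dual frame {S_Φ^{-1} φ_i} also does phase retrieval. -/
/-!
The frame operator `S x = ∑ j, ⟪φ j, x⟫ φ j` is symmetric, and the dual frame satisfies
`S (ψ i) = φ i`, so `⟪S x, ψ i⟫ = ⟪x, φ i⟫`: the measurements of `S x` against `ψ` are those of
`x` against `φ`. Phase retrieval for `φ` forces `S` to be injective (a vector orthogonal to every
`φ j` has the same measurements as `0`), hence bijective in finite dimension, and every pair of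
vectors with equal `ψ`-measurements is of the form `S f, S g` with `f, g` having equal
`φ`-measurements.
-/

/-- Phase retrieval property. -/
def DoesPhaseRetrieval {𝕜 H : Type*} [RCLike 𝕜] [NormedAddCommGroup H]
    [InnerProductSpace 𝕜 H] {ι : Type*} (φ : ι → H) : Prop :=
  ∀ f g : H, (∀ i, ‖(inner 𝕜 f (φ i) : 𝕜)‖ = ‖(inner 𝕜 g (φ i) : 𝕜)‖) →
    ∃ θ : 𝕜, ‖θ‖ = 1 ∧ f = θ • g

open scoped InnerProductSpace

section

variable {𝕜 H : Type*} [RCLike 𝕜] [NormedAddCommGroup H] [InnerProductSpace 𝕜 H]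
  {ι : Type*}

theorem DoesPhaseRetrieval.eq_zero_of_forall_inner_eq_zero {φ : ι → H}
    (hφ : DoesPhaseRetrieval (𝕜 := 𝕜) φ) {x : H} (hx : ∀ i, ⟪x, φ i⟫_𝕜 = 0) : x = 0 := by
  obtain ⟨θ, -, hθ⟩ := hφ x 0 fun i => by rw [hx i, inner_zero_left]
  rwa [smul_zero] at hθ

theorem DoesPhaseRetrieval.of_surjective {H' : Type*} [NormedAddCommGroup H']
    [InnerProductSpace 𝕜 H'] {φ : ι → H} {ψ : ι → H'} {T : H →ₗ[𝕜] H'}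
    (hφ : DoesPhaseRetrieval (𝕜 := 𝕜) φ) (hT : Function.Surjective T)
    (hTψ : ∀ x i, ⟪T x, ψ i⟫_𝕜 = ⟪x, φ i⟫_𝕜) : DoesPhaseRetrieval (𝕜 := 𝕜) ψ := by
  intro f g hfg
  obtain ⟨f, rfl⟩ := hT f
  obtain ⟨g, rfl⟩ := hT g
  obtain ⟨θ, hθ, rfl⟩ := hφ f g fun i => by simpa only [hTψ] using hfg i
  exact ⟨θ, hθ, map_smul T θ g⟩

section FrameOperator

variable [Fintype ι]

variable (𝕜) in
noncomputable def frameOperator (φ : ι → H) : H →ₗ[𝕜] H :=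
  ∑ j, (innerₛₗ 𝕜 (φ j)).smulRight (φ j)

theorem frameOperator_apply (φ : ι → H) (x : H) :
    frameOperator 𝕜 φ x = ∑ j, ⟪φ j, x⟫_𝕜 • φ j := by
  simp only [frameOperator, LinearMap.sum_apply, LinearMap.smulRight_apply,
    innerₛₗ_apply_apply]

theorem isSymmetric_frameOperator (φ : ι → H) : (frameOperator 𝕜 φ).IsSymmetric := by
  intro x y
  simp only [frameOperator_apply, sum_inner, inner_sum, inner_smul_left, inner_smul_right]
  refine Finset.sum_congr rfl fun j _ => ?_
  rw [← inner_conj_symm x (φ j), mul_comm]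

theorem re_inner_self_frameOperator (φ : ι → H) (x : H) :
    RCLike.re ⟪x, frameOperator 𝕜 φ x⟫_𝕜 = ∑ j, ‖⟪φ j, x⟫_𝕜‖ ^ 2 := by
  simp only [frameOperator_apply, inner_sum, inner_smul_right, map_sum]
  refine Finset.sum_congr rfl fun j _ => ?_
  rw [← inner_conj_symm x (φ j), RCLike.mul_conj, ← RCLike.ofReal_pow, RCLike.ofReal_re]

theorem inner_eq_zero_of_frameOperator_eq_zero {φ : ι → H} {x : H}
    (hx : frameOperator 𝕜 φ x = 0) (j : ι) : ⟪φ j, x⟫_𝕜 = 0 := by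
  have hsum : ∑ j, ‖⟪φ j, x⟫_𝕜‖ ^ 2 = 0 := by
    rw [← re_inner_self_frameOperator, hx, inner_zero_right, map_zero]
  have hj := (Finset.sum_eq_zero_iff_of_nonneg fun j _ => by positivity).mp hsum j
    (Finset.mem_univ j)
  exact norm_eq_zero.mp (pow_eq_zero_iff two_ne_zero |>.mp hj)

theorem DoesPhaseRetrieval.injective_frameOperator {φ : ι → H}
    (hφ : DoesPhaseRetrieval (𝕜 := 𝕜) φ) : Function.Injective (frameOperator 𝕜 φ) := by
  refine (injective_iff_map_eq_zero _).mpr fun x hx => hφ.eq_zero_of_forall_inner_eq_zero ?_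
  intro i
  rw [← inner_conj_symm, inner_eq_zero_of_frameOperator_eq_zero hx i, map_zero]

theorem inner_frameOperator_of_frameOperator_eq {φ ψ : ι → H}
    (hψ : ∀ i, frameOperator 𝕜 φ (ψ i) = φ i) (x : H) (i : ι) :
    ⟪frameOperator 𝕜 φ x, ψ i⟫_𝕜 = ⟪x, φ i⟫_𝕜 := by
  rw [isSymmetric_frameOperator, hψ]

end FrameOperator

end

theorem canonicalDual_phaseRetrieval_general {𝕜 H : Type*} [RCLike 𝕜]
    [NormedAddCommGroup H] [InnerProductSpace 𝕜 H] [FiniteDimensional 𝕜 H]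
    {ι : Type*} [Fintype ι] (φ ψ : ι → H)
    (hψ : ∀ i, ∑ j, (inner 𝕜 (φ j) (ψ i) : 𝕜) • φ j = φ i)
    (hPR : DoesPhaseRetrieval (𝕜 := 𝕜) φ) :
    DoesPhaseRetrieval (𝕜 := 𝕜) ψ := by
  have hSψ : ∀ i, frameOperator 𝕜 φ (ψ i) = φ i := fun i => by rw [frameOperator_apply, hψ]
  have hS : Function.Surjective (frameOperator 𝕜 φ) :=
    LinearMap.injective_iff_surjective.mp hPR.injective_frameOperator
  exact hPR.of_surjective hS (inner_frameOperator_of_frameOperator_eq hSψ)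

/-- if a frame `φ` does phase retrieval, then its canonical dual
`{S_φ⁻¹ φ i}` (characterized by `S_φ (ψ i) = φ i`) does phase retrieval. -/
theorem canonicalDual_phaseRetrieval {𝕜 H : Type*} [RCLike 𝕜]
    [NormedAddCommGroup H] [InnerProductSpace 𝕜 H] [FiniteDimensional 𝕜 H]
    {ι : Type*} [Fintype ι] (φ ψ : ι → H)
    (hframe : Submodule.span 𝕜 (Set.range φ) = ⊤)
    (hψ : ∀ i, ∑ j, (inner 𝕜 (φ j) (ψ i) : 𝕜) • φ j = φ i)
    (hPR : DoesPhaseRetrieval (𝕜 := 𝕜) φ) :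
    DoesPhaseRetrieval (𝕜 := 𝕜) ψ :=
  canonicalDual_phaseRetrieval_general φ ψ hψ hPR
end

section
/- A family Φ = {φ_i}_{i∈I} in a finite-dimensional real Hilbert space H does phase retrieval if and only if Φ has the complement property: for every subset σ ⊆ I, either {φ_i}_{i∈σ} spans H or {φ_i}_{i∈σ^c} spans H. -/
/-!
In finite dimension a family spans `H` exactly when no nonzero vector is orthogonal to all of it.
If neither `φ '' σ` nor `φ '' σᶜ` spans, pick nonzero `u ⊥ φ '' σ` and `v ⊥ φ '' σᶜ`: then `u + v`
and `u - v` have the same measurements `|⟪·, φ i⟫|` but differ by more than a sign. Conversely, if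
`|⟪f, φ i⟫| = |⟪g, φ i⟫|` for all `i`, let `σ` be the set where `⟪f, φ i⟫ = ⟪g, φ i⟫`; then
`f - g ⊥ φ '' σ` and `f + g ⊥ φ '' σᶜ`, so one of them is zero.
-/

open Submodule

section Orthogonal

variable {𝕜 E : Type*} [RCLike 𝕜] [NormedAddCommGroup E] [InnerProductSpace 𝕜 E]

theorem Submodule.mem_orthogonal_span_iff {s : Set E} {x : E} :
    x ∈ (span 𝕜 s)ᗮ ↔ ∀ u ∈ s, inner 𝕜 u x = 0 := by
  rw [← span_singleton_le_iff_mem, ← isOrtho_iff_le, isOrtho_comm, isOrtho_span]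
  simp

theorem span_image_eq_top_iff_forall_inner_eq_zero [FiniteDimensional 𝕜 E] {ι : Type*}
    (φ : ι → E) (s : Set ι) :
    span 𝕜 (φ '' s) = ⊤ ↔ ∀ x, (∀ i ∈ s, inner 𝕜 x (φ i) = 0) → x = 0 := by
  simp only [← orthogonal_eq_bot_iff, Submodule.eq_bot_iff, mem_orthogonal_span_iff,
    Set.forall_mem_image, inner_eq_zero_symm]

end Orthogonal

theorem abs_real_inner_add_eq_abs_real_inner_sub {H : Type*} [NormedAddCommGroup H]
    [InnerProductSpace ℝ H] {u v y : H} (h : inner ℝ u y = 0 ∨ inner ℝ v y = 0) :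
    |(inner ℝ (u + v) y : ℝ)| = |(inner ℝ (u - v) y : ℝ)| := by
  rw [inner_add_left, inner_sub_left]
  rcases h with h | h <;> simp [h]

theorem phaseRetrieval_iff_complementProperty_general {H : Type*} [NormedAddCommGroup H]
    [InnerProductSpace ℝ H] [FiniteDimensional ℝ H] {ι : Type*}
    (φ : ι → H) :
    (∀ f g : H, (∀ i, |(inner ℝ f (φ i) : ℝ)| = |(inner ℝ g (φ i) : ℝ)|) →
        f = g ∨ f = -g) ↔
      ∀ σ : Set ι, Submodule.span ℝ (φ '' σ) = ⊤ ∨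
        Submodule.span ℝ (φ '' σᶜ) = ⊤ := by
  simp only [span_image_eq_top_iff_forall_inner_eq_zero]
  constructor
  · intro hPR σ
    by_contra! ⟨⟨u, hu, hu0⟩, ⟨v, hv, hv0⟩⟩
    rcases hPR (u + v) (u - v) fun i =>
        abs_real_inner_add_eq_abs_real_inner_sub ((em (i ∈ σ)).imp (hu i) (hv i)) with h | h
    · exact hv0 (by linear_combination (norm := module) (2⁻¹ : ℝ) • h)
    · exact hu0 (by linear_combination (norm := module) (2⁻¹ : ℝ) • h)
  · intro hCP f g habs
    rcases hCP {i | inner ℝ f (φ i) = inner ℝ g (φ i)} with h | h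
    · exact .inl <| sub_eq_zero.mp <| h _ fun i hi => by rw [inner_sub_left, hi, sub_self]
    · refine .inr <| eq_neg_of_add_eq_zero_left <| h _ fun i hi => ?_
      rw [inner_add_left, (abs_eq_abs.mp (habs i)).resolve_left hi, neg_add_cancel]

/-- in a finite-dimensional real Hilbert space, a family does
phase retrieval iff it has the complement property. -/
theorem phaseRetrieval_iff_complementProperty {H : Type*} [NormedAddCommGroup H]
    [InnerProductSpace ℝ H] [FiniteDimensional ℝ H] {ι : Type*} [Fintype ι]
    (φ : ι → H) :
    (∀ f g : H, (∀ i, |(inner ℝ f (φ i) : ℝ)| = |(inner ℝ g (φ i) : ℝ)|) →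
        f = g ∨ f = -g) ↔
      ∀ σ : Set ι, Submodule.span ℝ (φ '' σ) = ⊤ ∨
        Submodule.span ℝ (φ '' σᶜ) = ⊤ :=
  phaseRetrieval_iff_complementProperty_general φ
end

section
/- If Φ = {φ_i}_{i=1}^m is a full spark family in ℝ^n with m ≥ 2n - 1, then Φ does phase retrieval. -/
/-- A family of `m ≥ n` vectors in `ℝ^n` is full spark if every `n` of its
vectors are linearly independent. -/
def FullSpark {m n : ℕ} (φ : Fin m → EuclideanSpace ℝ (Fin n)) : Prop :=
  ∀ s : Finset (Fin m), s.card = n →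
    LinearIndependent ℝ (fun i : s => φ i)

/-!
Split the indices according to whether `⟪x, φ i⟫ = ⟪y, φ i⟫` or `⟪x, φ i⟫ = -⟪y, φ i⟫`. Since there
are at least `2n - 1` indices, one of the two classes has `n` elements. By full spark the
corresponding `n` vectors form a basis of `ℝ^n`, and `x` and `y` (resp. `x` and `-y`) have the
same inner products with all of them, hence coincide.
-/

open Finset RealInnerProductSpace

theorem Finset.le_card_filter_or_le_card_filter_not {α : Type*} (s : Finset α) (p : α → Prop)
    [DecidablePred p] {n : ℕ} (hs : 2 * n - 1 ≤ #s) :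
    n ≤ #(s.filter p) ∨ n ≤ #(s.filter fun a ↦ ¬p a) := by
  have := s.card_filter_add_card_filter_not p
  omega

theorem ext_inner_right_of_linearIndependent {𝕜 E ι : Type*} [RCLike 𝕜] [NormedAddCommGroup E]
    [InnerProductSpace 𝕜 E] [FiniteDimensional 𝕜 E] [Fintype ι] {v : ι → E}
    (hv : LinearIndependent 𝕜 v) (hcard : Fintype.card ι = Module.finrank 𝕜 E) {x y : E}
    (h : ∀ i, inner 𝕜 x (v i) = inner 𝕜 y (v i)) : x = y :=
  InnerProductSpace.ext_inner_right_basis (basisOfLinearIndependentOfCardEqFinrank' v hv hcard) <| by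
    simpa using h

theorem FullSpark.eq_of_le_card_filter_inner_eq {m n : ℕ} {φ : Fin m → EuclideanSpace ℝ (Fin n)}
    (hφ : FullSpark φ) {x y : EuclideanSpace ℝ (Fin n)}
    (h : n ≤ #(univ.filter fun i ↦ ⟪x, φ i⟫ = ⟪y, φ i⟫)) : x = y := by
  obtain ⟨s, hs, hcard⟩ := exists_subset_card_eq h
  exact ext_inner_right_of_linearIndependent (hφ s hcard) (by simp [hcard])
    fun i ↦ (mem_filter.1 (hs i.2)).2

/-- a full spark family of `m ≥ 2n - 1` vectors in `ℝ^n`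
does phase retrieval. -/
theorem fullSpark_phaseRetrieval {m n : ℕ}
    (φ : Fin m → EuclideanSpace ℝ (Fin n))
    (hm : 2 * n - 1 ≤ m) (hfs : FullSpark φ) :
    ∀ x y : EuclideanSpace ℝ (Fin n),
      (∀ i, |(inner ℝ x (φ i) : ℝ)| = |(inner ℝ y (φ i) : ℝ)|) → x = y ∨ x = -y := by
  intro x y h
  rcases univ.le_card_filter_or_le_card_filter_not (fun i ↦ ⟪x, φ i⟫ = ⟪y, φ i⟫)
    (by simpa using hm) with hsame | hopposite
  · exact .inl (hfs.eq_of_le_card_filter_inner_eq hsame)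
  · refine .inr (hfs.eq_of_le_card_filter_inner_eq (hopposite.trans (card_le_card ?_)))
    intro i hi
    simp only [mem_filter, mem_univ, true_and, inner_neg_left] at hi ⊢
    exact (abs_eq_abs.1 (h i)).resolve_left hi
end

section
/- If a family Φ = {φ_i}_{i∈I} in a real Hilbert space H of dimension n does phase retrieval, then Φ satisfies the minimal redundancy condition for (n-1)-erasures: for every subset σ ⊆ I with |σ| = n-1, the family {φ_i}_{i∈σ^c} still spans H. -/
/-!
If neither `{φ i}_{i ∈ S}` nor `{φ i}_{i ∉ S}` spans, take `u ≠ 0` orthogonal to the second family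
and `v ≠ 0` orthogonal to the first. Each `φ i` is orthogonal to `u` or to `v`, so `u + v` and
`u - v` have the same measurements `|⟪·, φ i⟫|`, and phase retrieval forces `u = 0` or `v = 0`.
Erasing `n - 1` vectors, the erased ones cannot span, so the remaining ones must.
-/

open Submodule
open scoped RealInnerProductSpace

section PhaseRetrieval

variable {H : Type*} [NormedAddCommGroup H] [InnerProductSpace ℝ H] {ι : Type*}

def IsPhaseRetrieval (φ : ι → H) : Prop :=
  ∀ f g : H, (∀ i, |⟪f, φ i⟫| = |⟪g, φ i⟫|) → f = g ∨ f = -g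

lemma abs_inner_add_eq_abs_inner_sub {u v x : H} (h : ⟪u, x⟫ = 0 ∨ ⟪v, x⟫ = 0) :
    |⟪u + v, x⟫| = |⟪u - v, x⟫| := by
  rcases h with h | h <;> simp [inner_add_left, inner_sub_left, h]

lemma IsPhaseRetrieval.eq_zero_or_eq_zero {φ : ι → H} (hφ : IsPhaseRetrieval φ) {u v : H}
    (h : ∀ i, ⟪u, φ i⟫ = 0 ∨ ⟪v, φ i⟫ = 0) : u = 0 ∨ v = 0 := by
  rcases hφ _ _ fun i ↦ abs_inner_add_eq_abs_inner_sub (h i) with h | h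
  · right; linear_combination (norm := module) (2⁻¹ : ℝ) • h
  · left; linear_combination (norm := module) (2⁻¹ : ℝ) • h

lemma exists_mem_orthogonal_ne_zero {K : Submodule ℝ H} [K.HasOrthogonalProjection] (hK : K ≠ ⊤) :
    ∃ u ∈ Kᗮ, u ≠ 0 :=
  (Submodule.ne_bot_iff _).mp (orthogonal_eq_bot_iff.not.mpr hK)

/-- The complement property of Balan–Casazza–Edidin. -/
theorem IsPhaseRetrieval.span_eq_top_or_span_compl_eq_top [FiniteDimensional ℝ H]
    {φ : ι → H} (hφ : IsPhaseRetrieval φ) (S : Set ι) :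
    span ℝ (φ '' S) = ⊤ ∨ span ℝ (φ '' Sᶜ) = ⊤ := by
  by_contra! ⟨hS, hSc⟩
  obtain ⟨u, hu, hu0⟩ := exists_mem_orthogonal_ne_zero hSc
  obtain ⟨v, hv, hv0⟩ := exists_mem_orthogonal_ne_zero hS
  refine (hφ.eq_zero_or_eq_zero fun i ↦ ?_).elim hu0 hv0
  by_cases hi : i ∈ S
  · exact .inr (inner_left_of_mem_orthogonal (subset_span (Set.mem_image_of_mem φ hi)) hv)
  · exact .inl (inner_left_of_mem_orthogonal (subset_span (Set.mem_image_of_mem φ hi)) hu)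

end PhaseRetrieval

lemma finrank_le_card_of_span_image_eq_top {K M ι : Type*} [DivisionRing K] [AddCommGroup M]
    [Module K M] {φ : ι → M} {σ : Finset ι} (h : span K (φ '' σ) = ⊤) :
    Module.finrank K M ≤ σ.card := by
  classical
  rw [← finrank_top, ← h, ← Finset.coe_image]
  exact (finrank_span_finset_le_card _).trans Finset.card_image_le

/-- a phase retrieval family in an `n`-dimensional real Hilbert
space satisfies the minimal redundancy condition for `(n-1)`-erasures. -/
theorem phaseRetrieval_MRC {H : Type*} [NormedAddCommGroup H]
    [InnerProductSpace ℝ H] [FiniteDimensional ℝ H] {ι : Type*} [Fintype ι]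
    [DecidableEq ι] (φ : ι → H)
    (hPR : ∀ f g : H, (∀ i, |(inner ℝ f (φ i) : ℝ)| = |(inner ℝ g (φ i) : ℝ)|) →
      f = g ∨ f = -g) :
    ∀ σ : Finset ι, σ.card = Module.finrank ℝ H - 1 →
      Submodule.span ℝ (φ '' ↑(σᶜ)) = ⊤ := by
  intro σ hσ
  rw [Finset.coe_compl]
  rcases IsPhaseRetrieval.span_eq_top_or_span_compl_eq_top hPR σ with hσtop | hσctop
  · -- `n ≤ n - 1` holds in `ℕ` only for `n = 0`, where `H` is trivial.
    have : Module.finrank ℝ H = 0 := by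
      have := finrank_le_card_of_span_image_eq_top hσtop
      omega
    have : Subsingleton H := Module.finrank_zero_iff.mp this
    exact Subsingleton.elim _ _
  · exact hσctop
end

section
/- The frame {(1,1), (1,-1)} does weak phase retrieval in ℝ², but does not do phase retrieval. -/
/-- `x` and `y` weakly have the same phase in `ℝ^n`. -/
def WeaklySamePhase {n : ℕ} (x y : EuclideanSpace ℝ (Fin n)) : Prop :=
  ∃ α : ℝ, (α = 1 ∨ α = -1) ∧
    ∀ j, x j ≠ 0 → y j ≠ 0 → Real.sign (x j) = α * Real.sign (y j)

/-- The family `{(1,1), (1,-1)}` in `ℝ²`. -/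
noncomputable def Φ : Fin 2 → EuclideanSpace ℝ (Fin 2) :=
  ![(WithLp.equiv 2 (Fin 2 → ℝ)).symm ![1, 1],
    (WithLp.equiv 2 (Fin 2 → ℝ)).symm ![1, -1]]

/-!
Since `|⟨x, (1,1)⟩|² - |⟨x, (1,-1)⟩|² = 4 x₀ x₁`, the two measurements determine the product
`x₀ x₁`. If `x₀ x₁ = y₀ y₁`, then all products `xᵢ yᵢ` have a common weak sign, which is exactly
weak phase retrieval. On the other hand `e₀ = (1,0)` and `e₁ = (0,1)` have the same measurements
`(1, 1)` in absolute value, yet `e₀ ≠ ±e₁`.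
-/

namespace Real

theorem sign_mul (a b : ℝ) : sign (a * b) = sign a * sign b := by
  rcases lt_trichotomy a 0 with ha | ha | ha <;> rcases lt_trichotomy b 0 with hb | hb | hb <;>
    simp [sign_of_pos, sign_of_neg, mul_pos_of_neg_of_neg, mul_neg_of_neg_of_pos,
      mul_neg_of_pos_of_neg, ha, hb]

theorem sign_mul_self_of_ne_zero {r : ℝ} (hr : r ≠ 0) : sign r * sign r = 1 := by
  rw [← sign_mul, sign_of_pos (mul_self_pos.mpr hr)]

end Real

theorem weaklySamePhase_of_mul_nonneg {n : ℕ} {x y : EuclideanSpace ℝ (Fin n)}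
    (h : ∀ i j, 0 ≤ x i * y i * (x j * y j)) : WeaklySamePhase x y := by
  by_cases hk : ∃ k, x k ≠ 0 ∧ y k ≠ 0
  · obtain ⟨k, hxk, hyk⟩ := hk
    set α := Real.sign (x k * y k)
    have hα : α * α = 1 := Real.sign_mul_self_of_ne_zero (mul_ne_zero hxk hyk)
    refine ⟨α, (Real.sign_apply_eq_of_ne_zero _ (mul_ne_zero hxk hyk)).symm, fun j hxj hyj => ?_⟩
    have hpos : 0 < x j * y j * (x k * y k) :=
      (h j k).lt_of_ne' (mul_ne_zero (mul_ne_zero hxj hyj) (mul_ne_zero hxk hyk))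
    have hjk : Real.sign (x j) * Real.sign (y j) * α = 1 := by
      rw [← Real.sign_mul, ← Real.sign_mul, Real.sign_of_pos hpos]
    have hy : Real.sign (y j) * Real.sign (y j) = 1 := Real.sign_mul_self_of_ne_zero hyj
    -- Multiply `hjk` by `α * sign (y j)` and cancel the squares `hα`, `hy`.
    linear_combination (-Real.sign (x j)) * hα - Real.sign (x j) * α ^ 2 * hy
      + α * Real.sign (y j) * hjk
  · push Not at hk
    exact ⟨1, .inl rfl, fun j hxj hyj => absurd (hk j hxj) hyj⟩

theorem weaklySamePhase_of_mul_eq {x y : EuclideanSpace ℝ (Fin 2)}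
    (h : x 0 * x 1 = y 0 * y 1) : WeaklySamePhase x y := by
  refine weaklySamePhase_of_mul_nonneg fun i j => ?_
  have hcross : x 0 * y 0 * (x 1 * y 1) = (x 0 * x 1) ^ 2 := by
    linear_combination (-(x 0 * x 1)) * h
  fin_cases i <;> fin_cases j
  · exact mul_self_nonneg _
  · exact hcross ▸ sq_nonneg _
  · exact mul_comm (x 0 * y 0) _ ▸ hcross ▸ sq_nonneg _
  · exact mul_self_nonneg _

theorem mul_eq_mul_of_abs_add_eq_of_abs_sub_eq {a b c d : ℝ} (hadd : |a + b| = |c + d|)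
    (hsub : |a - b| = |c - d|) : a * b = c * d := by
  have hadd' := congrArg (· ^ 2) hadd
  have hsub' := congrArg (· ^ 2) hsub
  simp only [sq_abs] at hadd' hsub'
  linear_combination (hadd' - hsub') / 4

theorem inner_Φ_zero (x : EuclideanSpace ℝ (Fin 2)) : inner ℝ x (Φ 0) = x 0 + x 1 := by
  simp [Φ, PiLp.inner_apply, Fin.sum_univ_two]

theorem inner_Φ_one (x : EuclideanSpace ℝ (Fin 2)) : inner ℝ x (Φ 1) = x 0 - x 1 := by
  simp [Φ, PiLp.inner_apply, Fin.sum_univ_two]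
  ring

/-- `{(1,1), (1,-1)}` does weak phase retrieval in `ℝ²`
but does not do phase retrieval. -/
theorem example_weak_not_phase :
    (∀ x y : EuclideanSpace ℝ (Fin 2),
      (∀ i, |(inner ℝ x (Φ i) : ℝ)| = |(inner ℝ y (Φ i) : ℝ)|) →
        WeaklySamePhase x y) ∧
    ¬ (∀ x y : EuclideanSpace ℝ (Fin 2),
      (∀ i, |(inner ℝ x (Φ i) : ℝ)| = |(inner ℝ y (Φ i) : ℝ)|) →
        x = y ∨ x = -y) := by
  refine ⟨fun x y h => weaklySamePhase_of_mul_eq ?_, fun h => ?_⟩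
  · apply mul_eq_mul_of_abs_add_eq_of_abs_sub_eq
    · simpa only [inner_Φ_zero] using h 0
    · simpa only [inner_Φ_one] using h 1
  · set e₀ : EuclideanSpace ℝ (Fin 2) := EuclideanSpace.single 0 1
    set e₁ : EuclideanSpace ℝ (Fin 2) := EuclideanSpace.single 1 1
    have hmeas : ∀ i, |(inner ℝ e₀ (Φ i) : ℝ)| = |(inner ℝ e₁ (Φ i) : ℝ)| := by
      intro i
      fin_cases i <;> simp [e₀, e₁, inner_Φ_zero, inner_Φ_one]
    rcases h e₀ e₁ hmeas with heq | heq <;>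
      simpa [e₀, e₁] using congrArg (· 0) heq
end
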